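/- Let ψ(k,x) be the orthonormal Hermite functions, A an r×r symmetric matrix, B_k B_k* = 2kI + A² Cholesky factorizations, and define the 2r×2r matrix function Ψ̃(k,x) = [[−B_{k+1}^{-1} A ψ(k,x), −B_{k+1}^{-1} √(2k+2) ψ(k+1,x)],[B_k^{-1} √(2k) ψ(k−1,x), −B_k^{-1} A ψ(k,x)]]. Then Ψ̃ satisfies the orthonormality relation ∫_{−∞}^∞ Ψ̃(j,x) Ψ̃(k,x)* dx = δ_{jk} I_{2r} for all j, k ≥ 0. -/
import Mathlib


open Matrix MeasureTheory

/-- The matrix valued function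
`Ψ̃(k,x) = [[−B_{k+1}⁻¹ A ψ(k,x), −B_{k+1}⁻¹ √(2k+2) ψ(k+1,x)],
            [B_k⁻¹ √(2k) ψ(k−1,x), −B_k⁻¹ A ψ(k,x)]]`. -/
noncomputable def Psit (r : ℕ) (A : Matrix (Fin r) (Fin r) ℝ)
    (B : ℕ → Matrix (Fin r) (Fin r) ℝ) (ψ : ℕ → ℝ → ℝ) (k : ℕ) (x : ℝ) :
    Matrix (Fin r ⊕ Fin r) (Fin r ⊕ Fin r) ℝ :=
  Matrix.fromBlocks
    (-(ψ k x • ((B (k + 1))⁻¹ * A)))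
    (-((Real.sqrt (2 * (k : ℝ) + 2) * ψ (k + 1) x) • (B (k + 1))⁻¹))
    ((Real.sqrt (2 * (k : ℝ)) * ψ (k - 1) x) • (B k)⁻¹)
    (-(ψ k x • ((B k)⁻¹ * A)))

private lemma int2 {f g : ℝ → ℝ} (hf : Integrable f) (hg : Integrable g) (c d : ℝ) :
    (∫ x : ℝ, (f x * c + g x * d)) = (∫ x : ℝ, f x) * c + (∫ x : ℝ, g x) * d := by
  rw [integral_add (hf.mul_const c) (hg.mul_const d), integral_mul_const, integral_mul_const]

private lemma keyM (r : ℕ) (A : Matrix (Fin r) (Fin r) ℝ)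
    (B : ℕ → Matrix (Fin r) (Fin r) ℝ)
    (hB : ∀ k : ℕ, B k * (B k)ᵀ = (2 * (k : ℝ)) • 1 + A * A)
    (hBu : ∀ k, IsUnit (B k)) (n : ℕ) :
    (B n)⁻¹ * A * (A * ((B n)⁻¹)ᵀ) + (2 * (n : ℝ)) • ((B n)⁻¹ * ((B n)⁻¹)ᵀ) = 1 := by
  have hd : IsUnit (B n).det := (Matrix.isUnit_iff_isUnit_det (B n)).mp (hBu n)
  have hdT : IsUnit (B n)ᵀ.det := by rwa [Matrix.det_transpose]
  have h1 : (B n)⁻¹ * A * (A * ((B n)⁻¹)ᵀ) + (2 * (n : ℝ)) • ((B n)⁻¹ * ((B n)⁻¹)ᵀ)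
      = (B n)⁻¹ * ((2 * (n : ℝ)) • 1 + A * A) * ((B n)ᵀ)⁻¹ := by
    rw [Matrix.transpose_nonsing_inv]
    noncomm_ring
  rw [h1, ← hB n, Matrix.mul_assoc, Matrix.mul_assoc, Matrix.mul_nonsing_inv _ hdT,
    Matrix.mul_one, Matrix.nonsing_inv_mul _ hd]

/-- let `ψ(k,·)` be the orthonormal Hermite functions
(satisfying `∫ ψ_j ψ_k = δ_{jk}`, the recurrence
`x ψ(k,x) = √((k+1)/2) ψ(k+1,x) + √(k/2) ψ(k−1,x)` with `ψ(−1,·) = 0`),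
`A` a symmetric `r×r` matrix and `B_k B_kᵀ = 2k I + A²` Cholesky
factorizations.  Then `Ψ̃` satisfies the orthonormality relation
`∫_{−∞}^∞ Ψ̃(j,x) Ψ̃(k,x)ᵀ dx = δ_{jk} I_{2r}` (stated entrywise). -/
theorem stmt18 (r : ℕ) (A : Matrix (Fin r) (Fin r) ℝ) (hA : Aᵀ = A)
    (B : ℕ → Matrix (Fin r) (Fin r) ℝ)
    (hB : ∀ k : ℕ, B k * (B k)ᵀ = (2 * (k : ℝ)) • 1 + A * A)
    (hBu : ∀ k, IsUnit (B k))
    (ψ : ℕ → ℝ → ℝ)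
    (hInt : ∀ j k, Integrable fun x : ℝ => ψ j x * ψ k x)
    (horth : ∀ j k : ℕ, (∫ x : ℝ, ψ j x * ψ k x) = if j = k then 1 else 0)
    (hrec : ∀ (k : ℕ) (x : ℝ),
      x * ψ k x = Real.sqrt (((k : ℝ) + 1) / 2) * ψ (k + 1) x
        + Real.sqrt ((k : ℝ) / 2) * ψ (k - 1) x) :
    ∀ (j k : ℕ) (p q : Fin r ⊕ Fin r),
      (∫ x : ℝ, (Psit r A B ψ j x * (Psit r A B ψ k x)ᵀ) p q)
        = if j = k then (1 : Matrix (Fin r ⊕ Fin r) (Fin r ⊕ Fin r) ℝ) p q else 0 := by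
  intro j k p q
  have key := keyM r A B hB hBu
  rcases p with a | a <;> rcases q with b | b
  · -- (1,1) block
    have hfun : (fun x : ℝ => (Psit r A B ψ j x * (Psit r A B ψ k x)ᵀ) (Sum.inl a) (Sum.inl b))
        = fun x => (ψ j x * ψ k x) * (((B (j+1))⁻¹ * A * ((B (k+1))⁻¹ * A)ᵀ) a b)
          + (ψ (j+1) x * ψ (k+1) x) *
            ((Real.sqrt (2*(j:ℝ)+2) * Real.sqrt (2*(k:ℝ)+2)) * (((B (j+1))⁻¹ * ((B (k+1))⁻¹)ᵀ) a b)) :=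
      funext fun x => by
        simp [Psit, Matrix.fromBlocks_transpose, Matrix.fromBlocks_multiply, Matrix.add_apply,
          Matrix.smul_mul, Matrix.mul_smul, Matrix.smul_apply, smul_eq_mul]
        ring
    rw [hfun, int2 (hInt j k) (hInt (j+1) (k+1)), horth, horth]
    by_cases hjk : j = k
    · subst hjk
      have hs : Real.sqrt (2*(j:ℝ)+2) * Real.sqrt (2*(j:ℝ)+2) = 2*(j:ℝ)+2 :=
        Real.mul_self_sqrt (by positivity)
      have hk := congrArg (fun M => M a b) (key (j+1))
      simp only [Matrix.add_apply, Matrix.smul_apply, smul_eq_mul] at hk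
      push_cast at hk
      rw [Matrix.one_apply] at hk
      have h2 : 2*((j:ℝ)+1) = 2*(j:ℝ)+2 := by ring
      rw [h2] at hk
      simp only [if_true, one_mul, hs, Matrix.transpose_mul, hA, Matrix.one_apply,
        Sum.inl.injEq, ← Matrix.mul_assoc] at *
      linarith
    · simp [hjk, fun h => hjk (Nat.add_right_cancel h)]
  · -- (1,2) block
    have hfun : (fun x : ℝ => (Psit r A B ψ j x * (Psit r A B ψ k x)ᵀ) (Sum.inl a) (Sum.inr b))
        = fun x => (ψ j x * ψ (k-1) x) *
            (-(Real.sqrt (2*(k:ℝ))) * (((B (j+1))⁻¹ * A * ((B k)⁻¹)ᵀ) a b))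
          + (ψ (j+1) x * ψ k x) *
            (Real.sqrt (2*(j:ℝ)+2) * (((B (j+1))⁻¹ * ((B k)⁻¹ * A)ᵀ) a b)) :=
      funext fun x => by
        simp [Psit, Matrix.fromBlocks_transpose, Matrix.fromBlocks_multiply, Matrix.add_apply,
          Matrix.smul_mul, Matrix.mul_smul, Matrix.smul_apply, smul_eq_mul]
        ring
    rw [hfun, int2 (hInt j (k-1)) (hInt (j+1) k), horth, horth]
    rcases k with _ | m
    · simp [Matrix.one_apply]
    · by_cases hj : j = m
      · subst hj
        simp only [Nat.add_sub_cancel, if_pos rfl, one_mul, Matrix.one_apply,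
          Matrix.transpose_mul, hA, ← Matrix.mul_assoc]
        push_cast
        have h2 : 2*((j:ℝ)+1) = 2*(j:ℝ)+2 := by ring
        rw [h2]
        simp
      · have h1 : ¬ (j = m + 1 - 1) := by omega
        have h2 : ¬ (j + 1 = m + 1) := by omega
        have h3 : (if j = m + 1 then (1 : Matrix (Fin r ⊕ Fin r) (Fin r ⊕ Fin r) ℝ) (Sum.inl a) (Sum.inr b) else 0) = 0 := by
          simp [Matrix.one_apply]
        rw [h3]
        simp [hj, h2]
  · -- (2,1) block
    have hfun : (fun x : ℝ => (Psit r A B ψ j x * (Psit r A B ψ k x)ᵀ) (Sum.inr a) (Sum.inl b))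
        = fun x => (ψ (j-1) x * ψ k x) *
            (-(Real.sqrt (2*(j:ℝ))) * (((B j)⁻¹ * ((B (k+1))⁻¹ * A)ᵀ) a b))
          + (ψ j x * ψ (k+1) x) *
            (Real.sqrt (2*(k:ℝ)+2) * (((B j)⁻¹ * A * ((B (k+1))⁻¹)ᵀ) a b)) :=
      funext fun x => by
        simp [Psit, Matrix.fromBlocks_transpose, Matrix.fromBlocks_multiply, Matrix.add_apply,
          Matrix.smul_mul, Matrix.mul_smul, Matrix.smul_apply, smul_eq_mul]
        ring
    rw [hfun, int2 (hInt (j-1) k) (hInt j (k+1)), horth, horth]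
    rcases j with _ | m
    · simp [Matrix.one_apply]
    · by_cases hk : m = k
      · subst hk
        simp only [Nat.add_sub_cancel, if_pos rfl, one_mul, Matrix.one_apply,
          Matrix.transpose_mul, hA, ← Matrix.mul_assoc]
        push_cast
        have h2 : 2*((m:ℝ)+1) = 2*(m:ℝ)+2 := by ring
        rw [h2]
        simp
      · have h1 : ¬ (m + 1 - 1 = k) := by omega
        have h2 : ¬ (m + 1 = k + 1) := by omega
        have h3 : (if m + 1 = k then (1 : Matrix (Fin r ⊕ Fin r) (Fin r ⊕ Fin r) ℝ) (Sum.inr a) (Sum.inl b) else 0) = 0 := by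
          simp [Matrix.one_apply]
        rw [h3]
        simp [hk, h2]
  · -- (2,2) block
    have hfun : (fun x : ℝ => (Psit r A B ψ j x * (Psit r A B ψ k x)ᵀ) (Sum.inr a) (Sum.inr b))
        = fun x => (ψ (j-1) x * ψ (k-1) x) *
            ((Real.sqrt (2*(j:ℝ)) * Real.sqrt (2*(k:ℝ))) * (((B j)⁻¹ * ((B k)⁻¹)ᵀ) a b))
          + (ψ j x * ψ k x) * (((B j)⁻¹ * A * ((B k)⁻¹ * A)ᵀ) a b) :=
      funext fun x => by
        simp [Psit, Matrix.fromBlocks_transpose, Matrix.fromBlocks_multiply, Matrix.add_apply,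
          Matrix.smul_mul, Matrix.mul_smul, Matrix.smul_apply, smul_eq_mul]
        ring
    rw [hfun, int2 (hInt (j-1) (k-1)) (hInt j k), horth, horth]
    by_cases hjk : j = k
    · subst hjk
      have hs : Real.sqrt (2*(j:ℝ)) * Real.sqrt (2*(j:ℝ)) = 2*(j:ℝ) :=
        Real.mul_self_sqrt (by positivity)
      have hk := congrArg (fun M => M a b) (key j)
      simp only [Matrix.add_apply, Matrix.smul_apply, smul_eq_mul] at hk
      rw [Matrix.one_apply] at hk
      simp only [if_pos rfl, if_true, one_mul, hs, Matrix.transpose_mul, hA, Matrix.one_apply,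
        Sum.inr.injEq, ← Matrix.mul_assoc] at *
      linarith
    · have h2 : (if j = k then (1 : Matrix (Fin r ⊕ Fin r) (Fin r ⊕ Fin r) ℝ) (Sum.inr a) (Sum.inr b) else 0) = 0 := by
        simp [hjk]
      rw [h2]
      by_cases h1 : j - 1 = k - 1
      · have h0 : j = 0 ∨ k = 0 := by omega
        rcases h0 with h0 | h0 <;> subst h0 <;> simp [hjk, h1]
      · simp [h1, hjk]
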